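/- Let D be a convex domain in ℝ^d. Let w : [0,T] → ℝ^n be absolutely continuous with derivative g ∈ L¹([0,T]; ℝ^n), and suppose (x, φ) is a pair of continuous paths such that (x, φ) solves the Skorohod problem on D for the path y(t) = x₀ + ∫₀^t σ(x(s)) g(s) ds + ∫₀^t b(x(s)) ds, where x₀ ∈ cl(D). Then the total variation of x satisfies ‖x‖_{[0,T]} ≤ 2(√2 + 1)(‖σ‖_∞ ∫₀^T |g(s)| ds + ‖b‖_∞ T); in particular max_{0 ≤ t ≤ T} |x(t) − x₀| is bounded by the same quantity. -/

import Mathlib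

open MeasureTheory ProbabilityTheory Set RealInnerProductSpace

noncomputable section

/-- `d`-dimensional Euclidean space. -/
abbrev Euc (d : ℕ) := EuclideanSpace ℝ (Fin d)

/-- The set `N_{x,r}` of inward unit normal vectors at `x` with radius `r`:
`{n : ‖n‖ = 1, B(x - r n, r) ∩ D = ∅}`. -/
def normalSet {d : ℕ} (D : Set (Euc d)) (x : Euc d) (r : ℝ) : Set (Euc d) :=
  {n | ‖n‖ = 1 ∧ Metric.ball (x - r • n) r ∩ D = ∅}

/-- The set `N_x = ⋃_{r>0} N_{x,r}` of inward unit normal vectors at `x`. -/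
def normalCone {d : ℕ} (D : Set (Euc d)) (x : Euc d) : Set (Euc d) :=
  ⋃ r > 0, normalSet D x r

/-- `(ξ, φ)` solves the Skorohod problem for `w` on `D` over `[0,T]`, with representing
finite measure `μ` and direction function `nv`: `ξ` stays in `cl(D)`, `ξ = w + φ`,
`φ(t) = ∫_{[0,t]} nv dμ`, `‖φ‖_{[0,t]} = μ([0,t])`, `μ` is carried by the times where
`ξ` is on the boundary, and `nv(s) ∈ N_{ξ(s)}` for `μ`-a.e. `s`. -/
structure IsSkorohodSolution {d : ℕ} (D : Set (Euc d)) (T : ℝ) (w ξ φ : ℝ → Euc d)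
    (μ : Measure ℝ) (nv : ℝ → Euc d) : Prop where
  cont_ξ : ContinuousOn ξ (Icc 0 T)
  cont_φ : ContinuousOn φ (Icc 0 T)
  mem : ∀ t ∈ Icc 0 T, ξ t ∈ closure D
  init : ξ 0 = w 0
  decomp : ∀ t ∈ Icc 0 T, ξ t = w t + φ t
  φ_zero : φ 0 = 0
  finite : IsFiniteMeasure μ
  carrier : μ (Icc 0 T)ᶜ = 0
  meas_nv : Measurable nv
  repr : ∀ t ∈ Icc 0 T, φ t = ∫ s in Icc 0 t, nv s ∂μ
  total_var : ∀ t ∈ Icc 0 T, eVariationOn φ (Icc 0 t) = μ (Icc 0 t)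
  bdry : μ {s | ξ s ∉ frontier D} = 0
  normal : ∀ᵐ s ∂μ, nv s ∈ normalCone D (ξ s)

/-- `‖w‖_{∞,[s,t]} = max_{s ≤ u ≤ v ≤ t} |w(u) − w(v)|`. -/
def supOsc {d : ℕ} (w : ℝ → Euc d) (s t : ℝ) : ℝ :=
  ⨆ p : Icc s t × Icc s t, ‖w p.1.1 - w p.2.1‖

/-- Total variation `‖φ‖_{[s,t]}` as a real number. -/
def totalVar {d : ℕ} (φ : ℝ → Euc d) (s t : ℝ) : ℝ :=
  (eVariationOn φ (Icc s t)).toReal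

/-!
On a convex domain an inward normal `n ∈ N_p` satisfies `⟪z - p, n⟫ ≥ 0` for every `z ∈ cl D`,
so the reflection term never pushes `x` away from a point of its own path. Expanding
`‖x t - x u‖²` along a fine partition of `[u, v]`, the increments of `φ` thus contribute only an
error that vanishes with the mesh, while those of `y` contribute at most `2 K (F v - F u)`, where
`K` is the diameter of `x '' [u, v]` and `F t = ∫₀ᵗ ‖σ(x s) g(s) + b(x s)‖ ds`. Applied on every
subinterval this gives `K² ≤ 2 K (F v - F u)`, hence `‖x v - x u‖ ≤ K ≤ 2 (F v - F u)`, and summing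
over partitions bounds the total variation by `2 F T ≤ 2 (‖σ‖_∞ ∫ ‖g‖ + ‖b‖_∞ T)`.
-/

open Filter Topology

theorem le_of_forall_mem_Ioc_le_add_mul {a b c : ℝ} (h : ∀ ε ∈ Ioc (0 : ℝ) 1, a ≤ b + ε * c) :
    a ≤ b := by
  have hlim : Tendsto (fun ε : ℝ => b + ε * c) (𝓝[>] 0) (𝓝 b) :=
    ((continuous_const.add (continuous_id.mul continuous_const)).tendsto' 0 b (by simp)).mono_left
      nhdsWithin_le_nhds
  refine ge_of_tendsto hlim ?_
  filter_upwards [Ioc_mem_nhdsGT one_pos] with ε hε using h ε hε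

theorem eVariationOn_le_of_edist_le {α E E' : Type*} [LinearOrder α] [PseudoEMetricSpace E]
    [PseudoEMetricSpace E'] {f : α → E} {g : α → E'} {s : Set α}
    (h : ∀ a ∈ s, ∀ b ∈ s, a ≤ b → edist (f b) (f a) ≤ edist (g b) (g a)) :
    eVariationOn f s ≤ eVariationOn g s :=
  iSup_le fun ⟨_, _, hu, us⟩ =>
    (Finset.sum_le_sum fun i _ => h _ (us i) _ (us (i + 1)) (hu i.le_succ)).trans
      (eVariationOn.sum_le hu us)

theorem sub_le_sub_of_forall_small_step {Φ Ψ : ℝ → ℝ} {u v δ : ℝ} (huv : u ≤ v) (hδ : 0 < δ)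
    (h : ∀ a c, u ≤ a → a ≤ c → c ≤ v → c - a ≤ δ → Φ c - Φ a ≤ Ψ c - Ψ a) :
    Φ v - Φ u ≤ Ψ v - Ψ u := by
  obtain ⟨m, hm⟩ := exists_nat_gt ((v - u) / δ)
  have hm0 : (0 : ℝ) < m := (div_nonneg (sub_nonneg.2 huv) hδ.le).trans_lt hm
  set p : ℕ → ℝ := fun k => u + k * ((v - u) / m)
  have hp_step : ∀ k, p (k + 1) - p k = (v - u) / m := fun k => by simp only [p]; push_cast; ring
  have hstep0 : 0 ≤ (v - u) / m := div_nonneg (sub_nonneg.2 huv) hm0.le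
  have hp_mem : ∀ k ≤ m, u ≤ p k ∧ p k ≤ v := fun k hk => by
    have hk : (k : ℝ) / m ≤ 1 := div_le_one_of_le₀ (by exact_mod_cast hk) hm0.le
    have : p k = u + (k / m) * (v - u) := by simp only [p]; ring
    constructor <;> nlinarith [div_nonneg k.cast_nonneg hm0.le]
  have hp0 : p 0 = u := by simp [p]
  have hpm : p m = v := by simp only [p]; field_simp; ring
  calc Φ v - Φ u = ∑ k ∈ Finset.range m, (Φ (p (k + 1)) - Φ (p k)) := by
        rw [Finset.sum_range_sub (fun k => Φ (p k)), hp0, hpm]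
    _ ≤ ∑ k ∈ Finset.range m, (Ψ (p (k + 1)) - Ψ (p k)) := by
        refine Finset.sum_le_sum fun k hk => ?_
        have hk := Finset.mem_range.1 hk
        refine h _ _ (hp_mem k hk.le).1 (by linarith [hp_step k]) (hp_mem (k + 1) hk).2 ?_
        rw [hp_step, div_le_iff₀ hm0]
        rw [div_lt_iff₀ hδ] at hm
        linarith
    _ = Ψ v - Ψ u := by rw [Finset.sum_range_sub (fun k => Ψ (p k)), hp0, hpm]

/-- What a Skorohod solution on a convex domain provides on `[u, v]`: up to the oscillation of `x`,
the increments of the reflection term `φ` never point away from a point of the path. -/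
structure IsReflectedPath {E : Type*} [NormedAddCommGroup E] [InnerProductSpace ℝ E]
    (x y φ : ℝ → E) (F G : ℝ → ℝ) (u v : ℝ) : Prop where
  continuousOn : ContinuousOn x (Icc u v)
  eq_add : ∀ t ∈ Icc u v, x t = y t + φ t
  norm_sub_y_le : ∀ a c, u ≤ a → a ≤ c → c ≤ v → ‖y c - y a‖ ≤ F c - F a
  norm_sub_φ_le : ∀ a c, u ≤ a → a ≤ c → c ≤ v → ‖φ c - φ a‖ ≤ G c - G a
  inner_sub_φ_le : ∀ ε a c, u ≤ a → a ≤ c → c ≤ v → (∀ s ∈ Icc a c, ‖x a - x s‖ ≤ ε) →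
    ∀ b ∈ Icc u v, ⟪x a - x b, φ c - φ a⟫ ≤ ε * (G c - G a)

namespace IsReflectedPath

variable {E : Type*} [NormedAddCommGroup E] [InnerProductSpace ℝ E] {x y φ : ℝ → E}
  {F G : ℝ → ℝ} {u v : ℝ}

theorem mono (h : IsReflectedPath x y φ F G u v) {u' v' : ℝ} (hu : u ≤ u') (hv : v' ≤ v) :
    IsReflectedPath x y φ F G u' v' where
  continuousOn := h.continuousOn.mono (Icc_subset_Icc hu hv)
  eq_add t ht := h.eq_add t (Icc_subset_Icc hu hv ht)
  norm_sub_y_le a c ha hac hc := h.norm_sub_y_le a c (hu.trans ha) hac (hc.trans hv)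
  norm_sub_φ_le a c ha hac hc := h.norm_sub_φ_le a c (hu.trans ha) hac (hc.trans hv)
  inner_sub_φ_le ε a c ha hac hc hε b hb :=
    h.inner_sub_φ_le ε a c (hu.trans ha) hac (hc.trans hv) hε b (Icc_subset_Icc hu hv hb)

theorem monotoneOn (h : IsReflectedPath x y φ F G u v) : MonotoneOn F (Icc u v) :=
  fun a ha c hc hac => sub_nonneg.1 ((norm_nonneg _).trans (h.norm_sub_y_le a c ha.1 hac hc.2))

theorem isBounded_image (h : IsReflectedPath x y φ F G u v) :
    Bornology.IsBounded (x '' Icc u v) :=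
  (isCompact_Icc.image_of_continuousOn h.continuousOn).isBounded

theorem sq_norm_sub_le_step (h : IsReflectedPath x y φ F G u v) {a c ε : ℝ} (ha : u ≤ a)
    (hac : a ≤ c) (hc : c ≤ v) (hε : ∀ s ∈ Icc a c, ‖x a - x s‖ ≤ ε) :
    ‖x c - x u‖ ^ 2 - ‖x a - x u‖ ^ 2 ≤
      2 * Metric.diam (x '' Icc u v) * (F c - F a) + ε * ((F c - F a) + 3 * (G c - G a)) := by
  have hav : a ≤ v := hac.trans hc
  have hxa : ‖x a - x u‖ ≤ Metric.diam (x '' Icc u v) := by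
    rw [← dist_eq_norm]
    exact Metric.dist_le_diam_of_mem h.isBounded_image (mem_image_of_mem x ⟨ha, hav⟩)
      (mem_image_of_mem x ⟨le_rfl, ha.trans hav⟩)
  have hΔx : x c - x a = (y c - y a) + (φ c - φ a) := by
    rw [h.eq_add c ⟨ha.trans hac, hc⟩, h.eq_add a ⟨ha, hav⟩]
    abel
  have hΔy := h.norm_sub_y_le a c ha hac hc
  have hΔφ := h.norm_sub_φ_le a c ha hac hc
  have hinner_y : ⟪x a - x u, y c - y a⟫ ≤ Metric.diam (x '' Icc u v) * (F c - F a) :=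
    (real_inner_le_norm _ _).trans (mul_le_mul hxa hΔy (norm_nonneg _) Metric.diam_nonneg)
  have hinner_φ := h.inner_sub_φ_le ε a c ha hac hc hε u ⟨le_rfl, ha.trans hav⟩
  have hsmall : ‖x c - x a‖ ≤ ε := norm_sub_rev (x c) (x a) ▸ hε c ⟨hac, le_rfl⟩
  have hsq : ‖x c - x a‖ ^ 2 ≤ ε * ((F c - F a) + (G c - G a)) := by
    rw [sq]
    refine mul_le_mul hsmall ?_ (norm_nonneg _) ((norm_nonneg _).trans hsmall)
    exact hΔx ▸ (norm_add_le _ _).trans (add_le_add hΔy hΔφ)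
  calc ‖x c - x u‖ ^ 2 - ‖x a - x u‖ ^ 2
        = 2 * ⟪x a - x u, y c - y a⟫ + 2 * ⟪x a - x u, φ c - φ a⟫ + ‖x c - x a‖ ^ 2 := by
        rw [show x c - x u = (x a - x u) + (x c - x a) by abel, norm_add_sq_real, hΔx,
          inner_add_right]
        ring
    _ ≤ _ := by linarith

theorem sq_norm_sub_le (h : IsReflectedPath x y φ F G u v) (huv : u ≤ v) :
    ‖x v - x u‖ ^ 2 ≤ 2 * Metric.diam (x '' Icc u v) * (F v - F u) := by
  refine le_of_forall_mem_Ioc_le_add_mul (c := (F v - F u) + 3 * (G v - G u)) fun ε hε => ?_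
  obtain ⟨δ, hδ, hxδ⟩ := Metric.uniformContinuousOn_iff_le.1
    (isCompact_Icc.uniformContinuousOn_of_continuous h.continuousOn) ε hε.1
  have hstep : ∀ a c, u ≤ a → a ≤ c → c ≤ v → c - a ≤ δ →
      ‖x c - x u‖ ^ 2 - ‖x a - x u‖ ^ 2 ≤
        (2 * Metric.diam (x '' Icc u v) * F c + ε * (F c + 3 * G c)) -
          (2 * Metric.diam (x '' Icc u v) * F a + ε * (F a + 3 * G a)) := by
    intro a c ha hac hc hδac
    refine (h.sq_norm_sub_le_step (ε := ε) ha hac hc fun s hs => ?_).trans_eq (by ring)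
    rw [← dist_eq_norm]
    refine hxδ a ⟨ha, hac.trans hc⟩ s ⟨ha.trans hs.1, hs.2.trans hc⟩ ?_
    rw [Real.dist_eq, abs_sub_comm, abs_of_nonneg (sub_nonneg.2 hs.1)]
    linarith [hs.2]
  have hu : ‖x u - x u‖ ^ 2 = 0 := by simp
  linarith [sub_le_sub_of_forall_small_step huv hδ hstep]

theorem diam_image_le (h : IsReflectedPath x y φ F G u v) (huv : u ≤ v) :
    Metric.diam (x '' Icc u v) ≤ 2 * (F v - F u) := by
  set K := Metric.diam (x '' Icc u v)
  have hF : 0 ≤ F v - F u := sub_nonneg.2 (h.monotoneOn ⟨le_rfl, huv⟩ ⟨huv, le_rfl⟩ huv)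
  have hchord : ∀ a ∈ Icc u v, ∀ c ∈ Icc u v, a ≤ c →
      dist (x a) (x c) ^ 2 ≤ 2 * K * (F v - F u) := by
    intro a ha c hc hac
    calc dist (x a) (x c) ^ 2 = ‖x c - x a‖ ^ 2 := by rw [dist_eq_norm']
      _ ≤ 2 * Metric.diam (x '' Icc a c) * (F c - F a) := (h.mono ha.1 hc.2).sq_norm_sub_le hac
      _ ≤ 2 * K * (F v - F u) := by
        have hdiam : Metric.diam (x '' Icc a c) ≤ K :=
          Metric.diam_mono (image_mono (Icc_subset_Icc ha.1 hc.2)) h.isBounded_image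
        have hFac : F c - F a ≤ F v - F u := by
          linarith [h.monotoneOn hc ⟨huv, le_rfl⟩ hc.2, h.monotoneOn ⟨le_rfl, huv⟩ ha ha.1]
        gcongr
        exact sub_nonneg.2 (h.monotoneOn ha hc hac)
  have hK : K ≤ √(2 * K * (F v - F u)) := by
    refine Metric.diam_le_of_forall_dist_le (Real.sqrt_nonneg _) ?_
    rintro _ ⟨a, ha, rfl⟩ _ ⟨c, hc, rfl⟩
    refine Real.le_sqrt_of_sq_le ?_
    rcases le_total a c with hac | hca
    · exact hchord a ha c hc hac
    · exact dist_comm (x a) (x c) ▸ hchord c hc a ha hca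
  have hK2 := (Real.le_sqrt Metric.diam_nonneg (by positivity)).1 hK
  nlinarith [Metric.diam_nonneg (s := x '' Icc u v)]

theorem norm_sub_le (h : IsReflectedPath x y φ F G u v) (huv : u ≤ v) :
    ‖x v - x u‖ ≤ 2 * (F v - F u) :=
  calc ‖x v - x u‖ = dist (x v) (x u) := (dist_eq_norm _ _).symm
    _ ≤ Metric.diam (x '' Icc u v) := Metric.dist_le_diam_of_mem h.isBounded_image
        (mem_image_of_mem x ⟨huv, le_rfl⟩) (mem_image_of_mem x ⟨le_rfl, huv⟩)
    _ ≤ 2 * (F v - F u) := h.diam_image_le huv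

theorem eVariationOn_le (h : IsReflectedPath x y φ F G u v) (huv : u ≤ v) :
    eVariationOn x (Icc u v) ≤ ENNReal.ofReal (2 * (F v - F u)) := by
  have hmono : MonotoneOn (fun t => 2 * F t) (Icc u v) :=
    fun a ha c hc hac => by linarith [h.monotoneOn ha hc hac]
  calc eVariationOn x (Icc u v) ≤ eVariationOn (fun t => 2 * F t) (Icc u v) := by
        refine eVariationOn_le_of_edist_le fun a ha c hc hac => ?_
        rw [edist_dist, edist_dist, dist_eq_norm, Real.dist_eq,
          abs_of_nonneg (sub_nonneg.2 (hmono ha hc hac))]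
        exact ENNReal.ofReal_le_ofReal (((h.mono ha.1 hc.2).norm_sub_le hac).trans_eq (by ring))
    _ = ENNReal.ofReal (2 * (F v - F u)) := by
        rw [← inter_self (Icc u v), hmono.eVariationOn_eq ⟨le_rfl, huv⟩ ⟨huv, le_rfl⟩, mul_sub]

end IsReflectedPath

theorem norm_eq_one_of_mem_normalCone {d : ℕ} {D : Set (Euc d)} {p n : Euc d}
    (hn : n ∈ normalCone D p) : ‖n‖ = 1 := by
  obtain ⟨r, -, hn⟩ := mem_iUnion₂.1 hn
  exact hn.1

theorem Convex.inner_sub_nonneg_of_mem_normalCone {d : ℕ} {D : Set (Euc d)} (hD : Convex ℝ D)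
    {p z n : Euc d} (hp : p ∈ closure D) (hz : z ∈ closure D) (hn : n ∈ normalCone D p) :
    0 ≤ ⟪z - p, n⟫ := by
  obtain ⟨r, hr, hn1, hball⟩ := mem_iUnion₂.1 hn
  have hfar : ∀ q ∈ closure D, r ≤ ‖q - (p - r • n)‖ := fun q hq => by
    by_contra! hlt
    have := Metric.isOpen_ball.inter_closure ⟨mem_ball_iff_norm.2 hlt, hq⟩
    rwa [hball, closure_empty] at this
  suffices 0 ≤ 2 * r * ⟪z - p, n⟫ from nonneg_of_mul_nonneg_right this (by positivity)
  -- the segment from `p` towards `z` stays in `cl D`, hence outside the ball `B(p - r n, r)`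
  refine le_of_forall_mem_Ioc_le_add_mul (c := ‖z - p‖ ^ 2) fun l hl => ?_
  have hq := hfar _ (hD.closure.add_smul_sub_mem hp hz ⟨hl.1.le, hl.2⟩)
  rw [show p + l • (z - p) - (p - r • n) = l • (z - p) + r • n by module] at hq
  have hsq := pow_le_pow_left₀ hr.le hq 2
  rw [norm_add_sq_real, norm_smul, norm_smul, real_inner_smul_left, real_inner_smul_right, hn1,
    Real.norm_of_nonneg hl.1.le, Real.norm_of_nonneg hr.le] at hsq
  nlinarith [hl.1]

namespace IsSkorohodSolution

variable {d : ℕ} {D : Set (Euc d)} {T : ℝ} {w ξ φ : ℝ → Euc d} {μ : Measure ℝ} {nv : ℝ → Euc d}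

theorem ae_norm_eq_one (h : IsSkorohodSolution D T w ξ φ μ nv) : ∀ᵐ s ∂μ, ‖nv s‖ = 1 :=
  h.normal.mono fun _ hs => norm_eq_one_of_mem_normalCone hs

theorem integrable (h : IsSkorohodSolution D T w ξ φ μ nv) : Integrable nv μ :=
  have := h.finite
  (integrable_const (1 : ℝ)).mono' h.meas_nv.aestronglyMeasurable
    (h.ae_norm_eq_one.mono fun _ hs => hs.le)

theorem sub_eq_setIntegral (h : IsSkorohodSolution D T w ξ φ μ nv) {a c : ℝ} (ha : 0 ≤ a)
    (hac : a ≤ c) (hc : c ≤ T) : φ c - φ a = ∫ s in Ioc a c, nv s ∂μ := by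
  rw [h.repr c ⟨ha.trans hac, hc⟩, h.repr a ⟨ha, hac.trans hc⟩, ← Icc_union_Ioc_eq_Icc ha hac,
    setIntegral_union ((Iic_disjoint_Ioc le_rfl).mono_left Icc_subset_Iic_self) measurableSet_Ioc
      h.integrable.integrableOn h.integrable.integrableOn, add_sub_cancel_left]

theorem norm_sub_le (h : IsSkorohodSolution D T w ξ φ μ nv) {a c : ℝ} (ha : 0 ≤ a)
    (hac : a ≤ c) (hc : c ≤ T) : ‖φ c - φ a‖ ≤ μ.real (Iic c) - μ.real (Iic a) := by
  have := h.finite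
  rw [h.sub_eq_setIntegral ha hac hc, ← measureReal_sdiff (Iic_subset_Iic.2 hac) measurableSet_Iic,
    Iic_sdiff_Iic]
  simpa using norm_setIntegral_le_of_norm_le_const_ae' (C := 1) (measure_lt_top μ _)
    (h.ae_norm_eq_one.mono fun _ hs _ => hs.le)

theorem ae_inner_sub_nonpos (h : IsSkorohodSolution D T w ξ φ μ nv) (hD : Convex ℝ D) :
    ∀ᵐ s ∂μ, ∀ z ∈ closure D, ⟪ξ s - z, nv s⟫ ≤ 0 := by
  filter_upwards [h.normal, mem_ae_iff.2 h.carrier] with s hn hs z hz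
  have := hD.inner_sub_nonneg_of_mem_normalCone (h.mem s hs) hz hn
  rw [← neg_sub, inner_neg_left]
  linarith

theorem inner_sub_le (h : IsSkorohodSolution D T w ξ φ μ nv) (hD : Convex ℝ D) {a c ε : ℝ}
    (ha : 0 ≤ a) (hac : a ≤ c) (hc : c ≤ T) (hε : ∀ s ∈ Icc a c, ‖ξ a - ξ s‖ ≤ ε) {z : Euc d}
    (hz : z ∈ closure D) : ⟪ξ a - z, φ c - φ a⟫ ≤ ε * (μ.real (Iic c) - μ.real (Iic a)) := by
  have := h.finite
  have hle : ∀ᵐ s ∂μ.restrict (Ioc a c), ⟪ξ a - z, nv s⟫ ≤ ε := by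
    filter_upwards [ae_restrict_of_ae (h.ae_inner_sub_nonpos hD),
      ae_restrict_of_ae h.ae_norm_eq_one, ae_restrict_mem measurableSet_Ioc] with s hs hs1 hsac
    calc ⟪ξ a - z, nv s⟫ = ⟪ξ a - ξ s, nv s⟫ + ⟪ξ s - z, nv s⟫ := by
          rw [← inner_add_left, sub_add_sub_cancel]
      _ ≤ ‖ξ a - ξ s‖ * ‖nv s‖ + 0 := add_le_add (real_inner_le_norm _ _) (hs z hz)
      _ ≤ ε := by rw [hs1, mul_one, add_zero]; exact hε s (Ioc_subset_Icc_self hsac)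
  rw [h.sub_eq_setIntegral ha hac hc, ← integral_inner h.integrable.integrableOn,
    ← measureReal_sdiff (Iic_subset_Iic.2 hac) measurableSet_Iic, Iic_sdiff_Iic]
  calc _ ≤ ∫ _ in Ioc a c, ε ∂μ :=
        integral_mono_ae (h.integrable.const_inner _).integrableOn (integrable_const _) hle
    _ = _ := by rw [setIntegral_const, smul_eq_mul, mul_comm]

theorem isReflectedPath (h : IsSkorohodSolution D T w ξ φ μ nv) (hD : Convex ℝ D) {F : ℝ → ℝ}
    (hw : ∀ a c, 0 ≤ a → a ≤ c → c ≤ T → ‖w c - w a‖ ≤ F c - F a) :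
    IsReflectedPath ξ w φ F (fun t => μ.real (Iic t)) 0 T where
  continuousOn := h.cont_ξ
  eq_add := h.decomp
  norm_sub_y_le := hw
  norm_sub_φ_le _ _ ha hac hc := h.norm_sub_le ha hac hc
  inner_sub_φ_le _ _ _ ha hac hc hε _ hb := h.inner_sub_le hD ha hac hc hε (h.mem _ hb)

end IsSkorohodSolution

theorem MeasureTheory.IntegrableOn.clm_apply_of_continuousOn {E E' : Type*} [NormedAddCommGroup E]
    [NormedSpace ℝ E] [NormedAddCommGroup E'] [NormedSpace ℝ E'] {A : ℝ → E →L[ℝ] E'}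
    {g : ℝ → E} {s : Set ℝ} (hs : IsCompact s) (hA : ContinuousOn A s) (hg : IntegrableOn g s) :
    IntegrableOn (fun t => A t (g t)) s := by
  obtain ⟨C, hC⟩ := hs.exists_bound_of_continuousOn hA
  refine (hg.norm.const_mul C).mono' ?_ ?_
  · exact isBoundedBilinearMap_apply.continuous.comp_aestronglyMeasurable
      ((hA.aestronglyMeasurable hs.measurableSet).prodMk hg.aestronglyMeasurable)
  · filter_upwards [ae_restrict_mem hs.measurableSet] with t ht
    exact (A t).le_of_opNorm_le (hC t ht) (g t)

theorem norm_sub_le_integral_norm_of_eq_add_integral {E : Type*} [NormedAddCommGroup E]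
    [NormedSpace ℝ E] {w h : ℝ → E} {w₀ : E} {T : ℝ} (hh : IntegrableOn h (Icc 0 T))
    (hw : ∀ t ∈ Icc 0 T, w t = w₀ + ∫ s in (0)..t, h s) {a c : ℝ} (ha : 0 ≤ a) (hac : a ≤ c)
    (hc : c ≤ T) : ‖w c - w a‖ ≤ (∫ s in (0)..c, ‖h s‖) - ∫ s in (0)..a, ‖h s‖ := by
  have hint : ∀ t ∈ Icc 0 T, IntervalIntegrable h volume 0 t := fun t ht =>
    (intervalIntegrable_iff_integrableOn_Icc_of_le ht.1).2 (hh.mono_set (Icc_subset_Icc_right ht.2))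
  have hc' : c ∈ Icc 0 T := ⟨ha.trans hac, hc⟩
  have ha' : a ∈ Icc 0 T := ⟨ha, hac.trans hc⟩
  rw [hw c hc', hw a ha', add_sub_add_left_eq_sub,
    intervalIntegral.integral_interval_sub_left (hint c hc') (hint a ha'),
    intervalIntegral.integral_interval_sub_left (hint c hc').norm (hint a ha').norm]
  exact intervalIntegral.norm_integral_le_integral_norm hac

theorem intervalIntegral_norm_clm_apply_add_le {E E' : Type*} [NormedAddCommGroup E]
    [NormedSpace ℝ E] [NormedAddCommGroup E'] [NormedSpace ℝ E'] {σ : E → E' →L[ℝ] E}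
    {b : E → E} {x : ℝ → E} {g : ℝ → E'} {a c S B : ℝ} (hac : a ≤ c) (hS : ∀ z, ‖σ z‖ ≤ S)
    (hB : ∀ z, ‖b z‖ ≤ B) (hg : IntegrableOn g (Icc a c))
    (hh : IntegrableOn (fun s => σ (x s) (g s) + b (x s)) (Icc a c)) :
    ∫ s in a..c, ‖σ (x s) (g s) + b (x s)‖ ≤ S * (∫ s in Icc a c, ‖g s‖) + B * (c - a) := by
  have hg' : IntervalIntegrable (fun s => ‖g s‖) volume a c :=
    (intervalIntegrable_iff_integrableOn_Icc_of_le hac).2 hg.norm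
  calc ∫ s in a..c, ‖σ (x s) (g s) + b (x s)‖ ≤ ∫ s in a..c, (S * ‖g s‖ + B) :=
        intervalIntegral.integral_mono_on hac
          ((intervalIntegrable_iff_integrableOn_Icc_of_le hac).2 hh.norm)
          ((hg'.const_mul S).add intervalIntegrable_const) fun s _ =>
            (norm_add_le _ _).trans (add_le_add ((σ (x s)).le_of_opNorm_le (hS _) _) (hB _))
    _ = S * (∫ s in Icc a c, ‖g s‖) + B * (c - a) := by
        rw [intervalIntegral.integral_add (hg'.const_mul S) intervalIntegrable_const,
          intervalIntegral.integral_const_mul, intervalIntegral.integral_const,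
          intervalIntegral.integral_of_le hac, integral_Icc_eq_integral_Ioc, smul_eq_mul,
          mul_comm (c - a)]

theorem stmt12_general {d n : ℕ} (D : Set (Euc d))
    (hDconv : Convex ℝ D) (T : ℝ) (hT : 0 < T)
    (σ : Euc d → Euc n →L[ℝ] Euc d) (b : Euc d → Euc d)
    (hσc : Continuous σ) (hσb : ∃ C, ∀ z, ‖σ z‖ ≤ C)
    (hbc : Continuous b) (hbb : ∃ C, ∀ z, ‖b z‖ ≤ C)
    (g : ℝ → Euc n) (hg : IntegrableOn g (Icc 0 T))
    (x₀ : Euc d)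
    (x φ : ℝ → Euc d) (μ : Measure ℝ) (nv : ℝ → Euc d)
    (y : ℝ → Euc d)
    (hy : ∀ t, y t = x₀ + (∫ s in Ioc (0:ℝ) t, σ (x s) (g s)) + ∫ s in Ioc (0:ℝ) t, b (x s))
    (hsol : IsSkorohodSolution D T y x φ μ nv) :
    totalVar x 0 T ≤
        2 * (Real.sqrt 2 + 1) *
          ((⨆ z, ‖σ z‖) * (∫ s in Icc (0:ℝ) T, ‖g s‖) + (⨆ z, ‖b z‖) * T) ∧
      ∀ t ∈ Icc (0:ℝ) T,
        ‖x t - x₀‖ ≤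
          2 * (Real.sqrt 2 + 1) *
            ((⨆ z, ‖σ z‖) * (∫ s in Icc (0:ℝ) T, ‖g s‖) + (⨆ z, ‖b z‖) * T) := by
  have hS : ∀ z, ‖σ z‖ ≤ ⨆ z, ‖σ z‖ := le_ciSup (hσb.imp fun _ hC => forall_mem_range.2 hC)
  have hB : ∀ z, ‖b z‖ ≤ ⨆ z, ‖b z‖ := le_ciSup (hbb.imp fun _ hC => forall_mem_range.2 hC)
  have hσx : IntegrableOn (fun s => σ (x s) (g s)) (Icc 0 T) :=
    hg.clm_apply_of_continuousOn isCompact_Icc (hσc.comp_continuousOn hsol.cont_ξ)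
  have hbx : IntegrableOn (fun s => b (x s)) (Icc 0 T) :=
    (hbc.comp_continuousOn hsol.cont_ξ).integrableOn_compact isCompact_Icc
  set F : ℝ → ℝ := fun t => ∫ s in (0)..t, ‖σ (x s) (g s) + b (x s)‖
  have hh : IntegrableOn (fun s => σ (x s) (g s) + b (x s)) (Icc 0 T) := hσx.add hbx
  have hyh : ∀ t ∈ Icc 0 T, y t = x₀ + ∫ s in (0)..t, σ (x s) (g s) + b (x s) := fun t ht => by
    have hsub : Ioc 0 t ⊆ Icc 0 T := Ioc_subset_Icc_self.trans (Icc_subset_Icc_right ht.2)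
    rw [hy, add_assoc, ← integral_add (hσx.mono_set hsub) (hbx.mono_set hsub),
      intervalIntegral.integral_of_le ht.1]
  have hpath : IsReflectedPath x y φ F (fun t => μ.real (Iic t)) 0 T :=
    hsol.isReflectedPath hDconv fun _ _ ha hac hc =>
      norm_sub_le_integral_norm_of_eq_add_integral hh hyh ha hac hc
  have hF0T : F 0 ≤ F T := hpath.monotoneOn ⟨le_rfl, hT.le⟩ ⟨hT.le, le_rfl⟩ hT.le
  have hbound : 2 * (F T - F 0) ≤
      2 * (√2 + 1) * ((⨆ z, ‖σ z‖) * (∫ s in Icc 0 T, ‖g s‖) + (⨆ z, ‖b z‖) * T) := by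
    have hFT := intervalIntegral_norm_clm_apply_add_le hT.le hS hB hg hh
    have hF0 : F 0 = 0 := intervalIntegral.integral_same
    rw [sub_zero] at hFT
    -- the argument gives the constant `2`, better than `2 (√2 + 1)`
    nlinarith [Real.sqrt_nonneg 2]
  refine ⟨(ENNReal.toReal_le_of_le_ofReal (by linarith) (hpath.eVariationOn_le hT.le)).trans
    hbound, fun t ht => ?_⟩
  have hx0 : x 0 = x₀ := by simp [hsol.init, hy]
  calc ‖x t - x₀‖ = ‖x t - x 0‖ := by rw [hx0]
    _ ≤ 2 * (F t - F 0) := (hpath.mono le_rfl ht.2).norm_sub_le ht.1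
    _ ≤ 2 * (F T - F 0) := by linarith [hpath.monotoneOn ht ⟨hT.le, le_rfl⟩ ht.2]
    _ ≤ _ := hbound

/-- total variation bound for the solution of a reflecting differential
equation on a convex domain driven by an absolutely continuous path with
`L¹`-derivative `g`. -/
theorem stmt12 {d n : ℕ} (D : Set (Euc d)) (hDopen : IsOpen D) (hDne : D.Nonempty)
    (hDconv : Convex ℝ D) (T : ℝ) (hT : 0 < T)
    (σ : Euc d → Euc n →L[ℝ] Euc d) (b : Euc d → Euc d)
    (hσc : Continuous σ) (hσb : ∃ C, ∀ z, ‖σ z‖ ≤ C)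
    (hbc : Continuous b) (hbb : ∃ C, ∀ z, ‖b z‖ ≤ C)
    (g : ℝ → Euc n) (hg : IntegrableOn g (Icc 0 T))
    (x₀ : Euc d) (hx₀ : x₀ ∈ closure D)
    (x φ : ℝ → Euc d) (μ : Measure ℝ) (nv : ℝ → Euc d)
    (y : ℝ → Euc d)
    (hy : ∀ t, y t = x₀ + (∫ s in Ioc (0:ℝ) t, σ (x s) (g s)) + ∫ s in Ioc (0:ℝ) t, b (x s))
    (hsol : IsSkorohodSolution D T y x φ μ nv) :
    totalVar x 0 T ≤
        2 * (Real.sqrt 2 + 1) *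
          ((⨆ z, ‖σ z‖) * (∫ s in Icc (0:ℝ) T, ‖g s‖) + (⨆ z, ‖b z‖) * T) ∧
      ∀ t ∈ Icc (0:ℝ) T,
        ‖x t - x₀‖ ≤
          2 * (Real.sqrt 2 + 1) *
            ((⨆ z, ‖σ z‖) * (∫ s in Icc (0:ℝ) T, ‖g s‖) + (⨆ z, ‖b z‖) * T) :=
  stmt12_general D hDconv T hT σ b hσc hσb hbc hbb g hg x₀ x φ μ nv y hy hsol

end
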